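/- arXiv:2107.11873 — 4 statements merged into one kernel-verified Lean document; each statement's English description precedes it below -/
import Mathlib

section
/- Let 𝓔 be a state ensemble on a d-dimensional complex Hilbert space ℋ with finite label set X, and let Λ(𝓔) denote the largest among all eigenvalues of all the operators 𝓔(x), x ∈ X. If M is a measurement with outcome set X satisfying 𝓔(x)·M(x) = Λ(𝓔)·M(x) for all x ∈ X, then Pg(𝓔; M) = d·Λ(𝓔), and consequently Pg(𝓔) = d·Λ(𝓔) = Pg(𝓔; M). -/
open scoped BigOperators
open Matrix
open scoped ComplexOrder

noncomputable section

abbrev Mat (d : ℕ) := Matrix (Fin d) (Fin d) ℂ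

def IsStateEnsemble {d : ℕ} {X : Type*} [Fintype X] (E : X → Mat d) : Prop :=
  (∀ x, (E x).PosSemidef) ∧ (∑ x, (E x).trace) = 1

def IsMeasurement {d : ℕ} {Z : Type*} [Fintype Z] (M : Z → Mat d) : Prop :=
  (∀ z, (M z).PosSemidef) ∧ (∑ z, M z) = 1

def IsScore {X Y : Type*} (f : X → Y → ℝ) : Prop :=
  ∀ x y, 0 ≤ f x y ∧ f x y ≤ 1

def IsPartialInfo {T X : Type*} [Fintype T] (α : T → X → ℝ) : Prop :=
  (∀ t x, 0 ≤ α t x) ∧ ∀ x, (∑ t, α t x) = 1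

def IsPostProc {T Y Z : Type*} [Fintype Y] (ν : T → Y → Z → ℝ) : Prop :=
  (∀ t y z, 0 ≤ ν t y z) ∧ ∀ t z, (∑ y, ν t y z) = 1

def Pg {d : ℕ} {X : Type*} [Fintype X] (E M : X → Mat d) : ℝ :=
  ∑ x, ((E x) * (M x)).trace.re

def PgMax {d : ℕ} {X : Type*} [Fintype X] (E : X → Mat d) : ℝ :=
  sSup {p : ℝ | ∃ M : X → Mat d, IsMeasurement M ∧ p = Pg E M}

def Escore {d : ℕ} {X Y : Type*} [Fintype X] [Fintype Y]
    (f : X → Y → ℝ) (E : X → Mat d) (M : Y → Mat d) : ℝ :=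
  ∑ x, ∑ y, f x y * ((E x) * (M y)).trace.re

def EMax {d : ℕ} {X Y : Type*} [Fintype X] [Fintype Y]
    (f : X → Y → ℝ) (E : X → Mat d) : ℝ :=
  sSup {p : ℝ | ∃ M : Y → Mat d, IsMeasurement M ∧ p = Escore f E M}

def Epost {d : ℕ} {X Y T Z : Type*} [Fintype X] [Fintype Y] [Fintype T] [Fintype Z]
    (f : X → Y → ℝ) (α : T → X → ℝ) (E : X → Mat d)
    (M : Z → Mat d) (ν : T → Y → Z → ℝ) : ℝ :=
  ∑ x, ∑ y, ∑ t, ∑ z, f x y * α t x * ν t y z * ((E x) * (M z)).trace.re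

def EpostMax {d : ℕ} {X Y T : Type*} [Fintype X] [Fintype Y] [Fintype T]
    (f : X → Y → ℝ) (α : T → X → ℝ) (E : X → Mat d) : ℝ :=
  sSup {p : ℝ | ∃ (n : ℕ) (M : Fin n → Mat d) (ν : T → Y → Fin n → ℝ),
    IsMeasurement M ∧ IsPostProc ν ∧ p = Epost f α E M ν}

def Eprior {d : ℕ} {X Y T : Type*} [Fintype X] [Fintype Y] [Fintype T]
    (f : X → Y → ℝ) (α : T → X → ℝ) (E : X → Mat d) (N : T → Y → Mat d) : ℝ :=
  ∑ x, ∑ y, ∑ t, f x y * α t x * ((E x) * (N t y)).trace.re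

def EpriorMax {d : ℕ} {X Y T : Type*} [Fintype X] [Fintype Y] [Fintype T]
    (f : X → Y → ℝ) (α : T → X → ℝ) (E : X → Mat d) : ℝ :=
  sSup {p : ℝ | ∃ N : T → Y → Mat d, (∀ t, IsMeasurement (N t)) ∧ p = Eprior f α E N}

def IsCompatible {d : ℕ} {T Y : Type*} [Fintype T] [Fintype Y] (N : T → Y → Mat d) : Prop :=
  ∃ (n : ℕ) (M : Fin n → Mat d) (ν : T → Y → Fin n → ℝ),
    IsMeasurement M ∧ IsPostProc ν ∧ ∀ t y, N t y = ∑ z, ν t y z • M z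

def stdPost {T Y : Type*} [DecidableEq Y] : T → Y → (T → Y) → ℝ :=
  fun t y φ => if y = φ t then 1 else 0

def Δconst {d : ℕ} {X Y : Type*} [Fintype X] [Fintype Y]
    (f : X → Y → ℝ) (E : X → Mat d) : ℝ :=
  ∑ x, ∑ y, f x y * (E x).trace.re

def auxEns {d : ℕ} {X Y : Type*} [Fintype X] [Fintype Y]
    (f : X → Y → ℝ) (E : X → Mat d) (y : Y) : Mat d :=
  (Δconst f E)⁻¹ • ∑ x, f x y • E x

def auxEnsPost {d : ℕ} {X Y T : Type*} [Fintype X] [Fintype Y] [Fintype T]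
    (f : X → Y → ℝ) (α : T → X → ℝ) (E : X → Mat d) (φ : T → Y) : Mat d :=
  ((Fintype.card Y : ℝ) ^ (Fintype.card T - 1) * Δconst f E)⁻¹ •
    ∑ x, ∑ t, (f x (φ t) * α t x) • E x

/-!
Every eigenvalue of every `E x` is at most `Λ`, so `Λ • 1 - E x` is positive semidefinite and
`tr (E x * N x) ≤ Λ * tr (N x)` for any measurement `N`; summing over `x` bounds every guessing
probability by `Λ * tr 1 = d * Λ`. The condition `E x * M x = Λ • M x` turns each of these
inequalities into an equality for `M`, which therefore attains the bound.
-/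

namespace Matrix

variable {n 𝕜 : Type*} [Fintype n] [RCLike 𝕜]

open scoped MatrixOrder in
lemma PosSemidef.trace_mul_nonneg {A B : Matrix n n 𝕜} (hA : A.PosSemidef) (hB : B.PosSemidef) :
    0 ≤ (A * B).trace := by
  classical
  obtain ⟨C, rfl⟩ := CStarAlgebra.nonneg_iff_eq_star_mul_self.mp hA.nonneg
  rw [star_eq_conjTranspose, mul_assoc, trace_mul_comm]
  exact (hB.mul_mul_conjTranspose_same C).trace_nonneg

variable [DecidableEq n]

lemma IsHermitian.eigenvalues_le {A : Matrix n n 𝕜} (hA : A.IsHermitian) {r : ℝ}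
    (h : ∀ (l : ℝ) (v : n → 𝕜), v ≠ 0 → A *ᵥ v = (l : 𝕜) • v → l ≤ r) (i : n) :
    hA.eigenvalues i ≤ r := by
  refine h _ (hA.eigenvectorBasis i) ?_ ?_
  · simpa using hA.eigenvectorBasis.orthonormal.ne_zero i
  · rw [hA.mulVec_eigenvectorBasis, RCLike.real_smul_eq_coe_smul (K := 𝕜)]

open scoped MatrixOrder in
lemma IsHermitian.posSemidef_smul_one_sub {A : Matrix n n 𝕜} (hA : A.IsHermitian) {r : ℝ}
    (h : ∀ i, hA.eigenvalues i ≤ r) : ((r : 𝕜) • 1 - A).PosSemidef := by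
  have : A ≤ algebraMap ℝ (Matrix n n 𝕜) r := by
    refine le_algebraMap_of_spectrum_le (fun x hx => ?_) hA.isSelfAdjoint
    obtain ⟨i, rfl⟩ := hA.spectrum_real_eq_range_eigenvalues ▸ hx
    exact h i
  rwa [Algebra.algebraMap_eq_smul_one, RCLike.real_smul_eq_coe_smul (K := 𝕜)] at this

lemma IsHermitian.re_trace_mul_le {A B : Matrix n n 𝕜} (hA : A.IsHermitian) {r : ℝ}
    (h : ∀ i, hA.eigenvalues i ≤ r) (hB : B.PosSemidef) :
    RCLike.re (A * B).trace ≤ r * RCLike.re B.trace := by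
  have key := (hA.posSemidef_smul_one_sub h).trace_mul_nonneg hB
  rw [sub_mul, smul_mul, one_mul, trace_sub, trace_smul, smul_eq_mul] at key
  have re_nonneg := (RCLike.nonneg_iff.mp key).1
  rw [map_sub, RCLike.re_ofReal_mul] at re_nonneg
  linarith

end Matrix

lemma IsMeasurement.sum_re_trace {d : ℕ} {Z : Type*} [Fintype Z] {M : Z → Mat d}
    (hM : IsMeasurement M) : ∑ z, (M z).trace.re = d := by
  rw [← Complex.re_sum, ← trace_sum, hM.2, trace_one]
  simp

lemma Pg_le_of_eigenvalues_le {d : ℕ} {X : Type*} [Fintype X] {E M : X → Mat d}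
    (hE : ∀ x, (E x).IsHermitian) {r : ℝ} (h : ∀ x i, (hE x).eigenvalues i ≤ r)
    (hM : IsMeasurement M) : Pg E M ≤ d * r :=
  calc Pg E M ≤ ∑ x, r * (M x).trace.re :=
        Finset.sum_le_sum fun x _ => (hE x).re_trace_mul_le (h x) (hM.1 x)
    _ = d * r := by rw [← Finset.mul_sum, hM.sum_re_trace, mul_comm]

lemma Pg_eq_of_mul_eq_smul {d : ℕ} {X : Type*} [Fintype X] {E M : X → Mat d} {r : ℝ}
    (hM : IsMeasurement M) (h : ∀ x, E x * M x = (r : ℂ) • M x) : Pg E M = d * r :=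
  calc Pg E M = ∑ x, r * (M x).trace.re := by
        simp only [Pg, h, trace_smul, smul_eq_mul, Complex.re_ofReal_mul]
    _ = d * r := by rw [← Finset.mul_sum, hM.sum_re_trace, mul_comm]

theorem stmt1 {d : ℕ} {X : Type} [Fintype X] (E : X → Mat d) (hE : IsStateEnsemble E)
    (Λ : ℝ)
    (hΛ : IsGreatest {l : ℝ | ∃ (x : X) (v : Fin d → ℂ),
      v ≠ 0 ∧ (E x).mulVec v = (l : ℂ) • v} Λ)
    (M : X → Mat d) (hM : IsMeasurement M)
    (hcond : ∀ x, E x * M x = (Λ : ℂ) • M x) :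
    Pg E M = d * Λ ∧ PgMax E = d * Λ := by
  have hE_herm x : (E x).IsHermitian := (hE.1 x).isHermitian
  have eigenvalues_le x : ∀ i, (hE_herm x).eigenvalues i ≤ Λ :=
    (hE_herm x).eigenvalues_le fun l v hv hl => hΛ.2 ⟨x, v, hv, hl⟩
  have hPg := Pg_eq_of_mul_eq_smul hM hcond
  refine ⟨hPg, IsGreatest.csSup_eq ⟨⟨M, hM, hPg.symm⟩, ?_⟩⟩
  rintro _ ⟨N, hN, rfl⟩
  exact Pg_le_of_eigenvalues_le hE_herm eigenvalues_le hN
end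
end

section
/- Reduction of a general guessing game to state discrimination: Let 𝓔 be a state ensemble on a finite-dimensional complex Hilbert space ℋ with finite label set X, let Y be a finite set, let f : X × Y → [0,1] be a score function, and suppose the constant Δ(𝓔,f) = Σ_{x,y} f(x,y)·tr[𝓔(x)] is nonzero. Define the auxiliary state ensemble 𝓔_f with label set Y by 𝓔_f(y) = Δ(𝓔,f)^{-1} Σ_x f(x,y)·𝓔(x). Then 𝓔_f is a state ensemble, and for every measurement M with outcome set Y one has E_f(𝓔; M) = Δ(𝓔,f)·Pg(𝓔_f; M); consequently E_f(𝓔) = Δ(𝓔,f)·Pg(𝓔_f). -/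
open scoped BigOperators
open Matrix
open scoped ComplexOrder

noncomputable section

/-! By linearity of the trace, `∑ x y, f x y * tr[E x * M y] = ∑ y, tr[(∑ x, f x y • E x) * M y]`,
which is `Δ * Pg (auxEns f E) M`. As `Δ ≥ 0`, multiplying by `Δ` commutes with taking the supremum
over measurements. -/

lemma Matrix.PosSemidef.ofReal_re_trace {n : Type*} [Fintype n] {A : Matrix n n ℂ}
    (hA : A.PosSemidef) : (A.trace.re : ℂ) = A.trace :=
  (Complex.eq_re_of_ofReal_le (r := 0) (by simpa using hA.trace_nonneg)).symm

lemma Matrix.PosSemidef.re_trace_nonneg {n : Type*} [Fintype n] {A : Matrix n n ℂ}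
    (hA : A.PosSemidef) : 0 ≤ A.trace.re :=
  (Complex.nonneg_iff.mp hA.trace_nonneg).1

open Pointwise in
lemma Real.sSup_setOf_eq_mul_of_nonneg {α : Type*} {P : α → Prop} {g h : α → ℝ} {c : ℝ}
    (hc : 0 ≤ c) (hgh : ∀ a, P a → g a = c * h a) :
    sSup {p | ∃ a, P a ∧ p = g a} = c * sSup {p | ∃ a, P a ∧ p = h a} := by
  rw [← smul_eq_mul, ← Real.sSup_smul_of_nonneg hc]
  congr 1
  ext p
  simp only [Set.mem_ofPred_eq, Set.mem_smul_set, smul_eq_mul]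
  constructor
  · rintro ⟨a, ha, rfl⟩
    exact ⟨h a, ⟨a, ha, rfl⟩, (hgh a ha).symm⟩
  · rintro ⟨_, ⟨a, ha, rfl⟩, rfl⟩
    exact ⟨a, ha, (hgh a ha).symm⟩

section GuessingGame

variable {d : ℕ} {X Y : Type*} [Fintype X] [Fintype Y] {f : X → Y → ℝ} {E : X → Mat d}

lemma Δconst_nonneg (hE : ∀ x, (E x).PosSemidef) (hf : IsScore f) : 0 ≤ Δconst f E :=
  Finset.sum_nonneg fun x _ => Finset.sum_nonneg fun y _ =>
    mul_nonneg (hf x y).1 (hE x).re_trace_nonneg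

lemma posSemidef_auxEns (hE : ∀ x, (E x).PosSemidef) (hf : IsScore f) (y : Y) :
    (auxEns f E y).PosSemidef :=
  (posSemidef_sum _ fun x _ => (hE x).smul (hf x y).1).smul
    (inv_nonneg.mpr (Δconst_nonneg hE hf))

lemma sum_trace_auxEns (hE : ∀ x, (E x).PosSemidef) (hΔ : Δconst f E ≠ 0) :
    ∑ y, (auxEns f E y).trace = 1 := by
  have hΔC : ∑ y, ∑ x, f x y • (E x).trace = (Δconst f E : ℂ) := by
    rw [Finset.sum_comm, Δconst]
    push_cast
    simp_rw [(hE _).ofReal_re_trace, Complex.real_smul]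
  simp_rw [auxEns, trace_smul, trace_sum, trace_smul, ← Finset.smul_sum, hΔC,
    Complex.real_smul, ← Complex.ofReal_mul, inv_mul_cancel₀ hΔ, Complex.ofReal_one]

lemma isStateEnsemble_auxEns (hE : ∀ x, (E x).PosSemidef) (hf : IsScore f)
    (hΔ : Δconst f E ≠ 0) : IsStateEnsemble (auxEns f E) :=
  ⟨posSemidef_auxEns hE hf, sum_trace_auxEns hE hΔ⟩

lemma Pg_auxEns (M : Y → Mat d) : Pg (auxEns f E) M = (Δconst f E)⁻¹ * Escore f E M := by
  simp only [Pg, auxEns, Escore, smul_mul, Matrix.sum_mul, trace_smul, trace_sum, Complex.re_sum,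
    Complex.smul_re, smul_eq_mul, Finset.mul_sum]
  exact Finset.sum_comm

lemma Escore_eq_Δconst_mul_Pg (hΔ : Δconst f E ≠ 0) (M : Y → Mat d) :
    Escore f E M = Δconst f E * Pg (auxEns f E) M := by
  rw [Pg_auxEns, mul_inv_cancel_left₀ hΔ]

end GuessingGame

theorem stmt4 {d : ℕ} {X Y : Type} [Fintype X] [Fintype Y]
    (E : X → Mat d) (hE : IsStateEnsemble E)
    (f : X → Y → ℝ) (hf : IsScore f)
    (hΔ : Δconst f E ≠ 0) :
    IsStateEnsemble (auxEns f E) ∧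
    (∀ M : Y → Mat d, IsMeasurement M →
      Escore f E M = Δconst f E * Pg (auxEns f E) M) ∧
    EMax f E = Δconst f E * PgMax (auxEns f E) :=
  ⟨isStateEnsemble_auxEns hE.1 hf hΔ, fun M _ => Escore_eq_Δconst_mul_Pg hΔ M,
    Real.sSup_setOf_eq_mul_of_nonneg (Δconst_nonneg hE.1 hf)
      fun M _ => Escore_eq_Δconst_mul_Pg hΔ M⟩
end
end

section
/- Standard-form reduction of the measurement and post-processing: Let M be a measurement on a finite-dimensional complex Hilbert space ℋ with finite outcome set Z, let Y, T be finite sets, and let ν be a post-processing map assigning to each t ∈ T a stochastic matrix ν_t(y | z). Define M̄_ν on the set Y^T of functions φ : T → Y by M̄_ν(φ) = Σ_z M(z)·Π_{t∈T} ν_t(φ(t) | z), and define π_t(y | φ) = δ_{y,φ(t)}. Then M̄_ν is a measurement with outcome set Y^T, and for every t ∈ T and y ∈ Y, Σ_{φ∈Y^T} π_t(y | φ)·M̄_ν(φ) = Σ_z ν_t(y | z)·M(z). Consequently, for every state ensemble 𝓔, score function f and partial information map α, one has E^post_{f,α}(𝓔; M, ν) = E^post_{f,α}(𝓔; M̄_ν,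 π). -/
open scoped BigOperators
open Matrix
open scoped ComplexOrder

noncomputable section

/-! `M̄_ν` is `M` coarse-grained by the product kernel `φ ↦ ∏ₜ νₜ(φ t | z)`, a stochastic matrix
whose marginal on the coordinate `t` is `νₜ`. The posterior score sees `(M, ν)` only through the
effective measurements `Nₜ(y) = ∑_z νₜ(y | z) M(z)`, and by the marginal property `(M̄_ν, π)` has
the same ones as `(M, ν)`. -/

section ProductKernel

variable {ι α R : Type*} [Fintype ι] [DecidableEq ι] [Fintype α] [CommSemiring R]
  {p : ι → α → R}

theorem Fintype.sum_prod_apply_eq_one (hp : ∀ i, ∑ a, p i a = 1) :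
    ∑ φ : ι → α, ∏ i, p i (φ i) = 1 := by
  simp [← Fintype.prod_sum, hp]

theorem Fintype.sum_ite_apply_mul_prod [DecidableEq α] (hp : ∀ i, ∑ a, p i a = 1) (i : ι)
    (a : α) : ∑ φ : ι → α, (if a = φ i then 1 else 0) * ∏ j, p j (φ j) = p i a := by
  set q : ι → α → R := fun j b => (if j = i then if a = b then 1 else 0 else 1) * p j b
  have hq : ∀ φ : ι → α, (if a = φ i then 1 else 0) * ∏ j, p j (φ j) = ∏ j, q j (φ j) :=
    fun φ => by
      simp only [q, Finset.prod_mul_distrib, Finset.prod_ite_eq', Finset.mem_univ, if_true]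
  have hq_sum : ∀ j, ∑ b, q j b = if j = i then p i a else 1 := fun j => by
    by_cases hj : j = i
    · subst hj; simp [q]
    · simp [q, hj, hp]
  simp_rw [hq, ← Fintype.prod_sum, hq_sum, Finset.prod_ite_eq', Finset.mem_univ, if_true]

end ProductKernel

theorem IsMeasurement.postProcess {d : ℕ} {Z W : Type*} [Fintype Z] [Fintype W]
    {M : Z → Mat d} (hM : IsMeasurement M) {w : W → Z → ℝ} (hw_nonneg : ∀ a z, 0 ≤ w a z)
    (hw_sum : ∀ z, ∑ a, w a z = 1) : IsMeasurement fun a => ∑ z, w a z • M z := by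
  refine ⟨fun a => posSemidef_sum _ fun z _ => (hM.1 z).smul (hw_nonneg a z), ?_⟩
  rw [Finset.sum_comm]
  simp_rw [← Finset.sum_smul, hw_sum, one_smul]
  exact hM.2

theorem re_trace_mul_sum_smul {d : ℕ} {ι : Type*} [Fintype ι] (E : Mat d) (c : ι → ℝ)
    (A : ι → Mat d) : (E * ∑ i, c i • A i).trace.re = ∑ i, c i * (E * A i).trace.re := by
  simp [Matrix.mul_sum, Matrix.trace_sum, Complex.re_sum, Matrix.trace_smul]

theorem Epost_eq_Eprior {d : ℕ} {X Y T Z : Type*} [Fintype X] [Fintype Y] [Fintype T]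
    [Fintype Z] (f : X → Y → ℝ) (α : T → X → ℝ) (E : X → Mat d) (M : Z → Mat d)
    (ν : T → Y → Z → ℝ) :
    Epost f α E M ν = Eprior f α E fun t y => ∑ z, ν t y z • M z := by
  simp only [Epost, Eprior]
  simp_rw [re_trace_mul_sum_smul, Finset.mul_sum, mul_assoc]

def standardForm {d : ℕ} {T Y Z : Type*} [Fintype T] [Fintype Z] (M : Z → Mat d)
    (ν : T → Y → Z → ℝ) (φ : T → Y) : Mat d :=
  ∑ z, (∏ t, ν t (φ t) z) • M z

theorem IsMeasurement.standardForm {d : ℕ} {T Y Z : Type*} [Fintype T] [DecidableEq T]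
    [Fintype Y] [Fintype Z] {M : Z → Mat d} (hM : IsMeasurement M) {ν : T → Y → Z → ℝ}
    (hν : IsPostProc ν) : IsMeasurement (standardForm M ν) :=
  hM.postProcess (fun φ z => Finset.prod_nonneg fun t _ => hν.1 t (φ t) z)
    fun z => Fintype.sum_prod_apply_eq_one fun t => hν.2 t z

theorem sum_stdPost_smul_standardForm {d : ℕ} {T Y Z : Type*} [Fintype T] [DecidableEq T]
    [Fintype Y] [DecidableEq Y] [Fintype Z] (M : Z → Mat d) {ν : T → Y → Z → ℝ}
    (hν : IsPostProc ν) (t : T) (y : Y) :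
    ∑ φ : T → Y, stdPost t y φ • standardForm M ν φ = ∑ z, ν t y z • M z := by
  simp_rw [standardForm, Finset.smul_sum, smul_smul]
  rw [Finset.sum_comm]
  simp_rw [← Finset.sum_smul]
  exact Finset.sum_congr rfl fun z _ =>
    congrArg (· • M z) (Fintype.sum_ite_apply_mul_prod (fun t' => hν.2 t' z) t y)

theorem stmt7 {d : ℕ} {X Y T Z : Type} [Fintype X] [Fintype Y] [Fintype T] [Fintype Z]
    [DecidableEq Y] [DecidableEq T]
    (M : Z → Mat d) (hM : IsMeasurement M)
    (ν : T → Y → Z → ℝ) (hν : IsPostProc ν) :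
    IsMeasurement (fun φ : T → Y => ∑ z, (∏ t, ν t (φ t) z) • M z) ∧
    (∀ (t : T) (y : Y),
      (∑ φ : T → Y, stdPost t y φ • ∑ z, (∏ t', ν t' (φ t') z) • M z)
        = ∑ z, ν t y z • M z) ∧
    (∀ (E : X → Mat d) (f : X → Y → ℝ) (α : T → X → ℝ),
      IsStateEnsemble E → IsScore f → IsPartialInfo α →
      Epost f α E M ν
        = Epost f α E (fun φ : T → Y => ∑ z, (∏ t, ν t (φ t) z) • M z) stdPost) := by
  have hmarginal := sum_stdPost_smul_standardForm M hν
  refine ⟨hM.standardForm hν, hmarginal, fun E f α _ _ _ => ?_⟩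
  rw [Epost_eq_Eprior, Epost_eq_Eprior]
  exact congrArg (Eprior f α E) (funext₂ fun t y => (hmarginal t y).symm)
end
end

section
/- Incompatibility witness: Let 𝓔 be a state ensemble on a finite-dimensional complex Hilbert space ℋ with finite label set X, let Y, T be finite sets, f : X × Y → [0,1] a score function and α a partial information map. If a collection (N_t)_{t∈T} of measurements with outcome set Y satisfies E^prior_{f,α}(𝓔; (N_t)) > E^post_{f,α}(𝓔), then the collection (N_t)_{t∈T} is incompatible. Equivalently: if (N_t)_{t∈T} is compatible, then E^prior_{f,α}(𝓔; (N_t)) ≤ E^post_{f,α}(𝓔). -/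
open scoped BigOperators
open Matrix
open scoped ComplexOrder

noncomputable section

/-!
A compatible family `N t y = ∑ z, ν t y z • M z` is read out of the single measurement `M` by the
post-processing `ν`, so its prior score is literally a posterior score and cannot exceed their
supremum. That supremum is a genuine one (not the junk value of `sSup` of an unbounded set)
because every posterior score is at most `1`: scores are at most `1` and the weights
`α t x`, `ν t y z`, `tr (E x M z)` are nonnegative and sum to the total trace of the ensemble.
-/

open scoped MatrixOrder in
lemma Matrix.PosSemidef.re_trace_mul_nonneg {n : Type*} [Fintype n] [DecidableEq n]
    {A B : Matrix n n ℂ} (hA : A.PosSemidef) (hB : B.PosSemidef) : 0 ≤ (A * B).trace.re := by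
  set S := CFC.sqrt A
  have hS : Sᴴ = S := (CFC.sqrt_nonneg A).posSemidef.isHermitian.eq
  -- `tr (A B) = tr (√A B √A)`, the trace of a positive semidefinite matrix.
  have hAB : (A * B).trace = (S * B * Sᴴ).trace := by
    rw [hS, ← CFC.sqrt_mul_sqrt_self A hA.nonneg, mul_assoc, trace_mul_comm]
  rw [hAB]
  exact (Complex.nonneg_iff.mp (hB.mul_mul_conjTranspose_same S).trace_nonneg).1

lemma re_trace_mul_sum_smul_s11 {n Z : Type*} [Fintype n] [Fintype Z]
    (A : Matrix n n ℂ) (c : Z → ℝ) (M : Z → Matrix n n ℂ) :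
    (A * ∑ z, c z • M z).trace.re = ∑ z, c z * (A * M z).trace.re := by
  simp [Finset.mul_sum, trace_sum, Complex.re_sum]

lemma IsStateEnsemble.sum_re_trace {d : ℕ} {X : Type*} [Fintype X] {E : X → Mat d}
    (hE : IsStateEnsemble E) : ∑ x, (E x).trace.re = 1 := by
  simpa [Complex.re_sum] using congrArg Complex.re hE.2

lemma IsMeasurement.sum_re_trace_mul {d : ℕ} {Z : Type*} [Fintype Z] {M : Z → Mat d}
    (hM : IsMeasurement M) (A : Mat d) : ∑ z, (A * M z).trace.re = A.trace.re := by
  simpa [hM.2] using (re_trace_mul_sum_smul_s11 A (fun _ => 1) M).symm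

lemma Epost_le_one {d : ℕ} {X Y T Z : Type*} [Fintype X] [Fintype Y] [Fintype T] [Fintype Z]
    {f : X → Y → ℝ} {α : T → X → ℝ} {E : X → Mat d} {M : Z → Mat d} {ν : T → Y → Z → ℝ}
    (hf : IsScore f) (hα : IsPartialInfo α) (hE : IsStateEnsemble E)
    (hM : IsMeasurement M) (hν : IsPostProc ν) :
    Epost f α E M ν ≤ 1 := by
  have hw : ∀ x t y z, 0 ≤ α t x * ν t y z * (E x * M z).trace.re := fun x t y z =>
    mul_nonneg (mul_nonneg (hα.1 t x) (hν.1 t y z)) ((hE.1 x).re_trace_mul_nonneg (hM.1 z))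
  calc Epost f α E M ν
      ≤ ∑ x, ∑ y, ∑ t, ∑ z, α t x * ν t y z * (E x * M z).trace.re := by
        unfold Epost
        gcongr ∑ x, ∑ y, ∑ t, ∑ z, ?_ with x _ y _ t _ z _
        simpa only [mul_assoc] using mul_le_of_le_one_left (hw x t y z) (hf x y).2
    _ = ∑ x, ∑ t, α t x * ∑ z, (∑ y, ν t y z) * (E x * M z).trace.re := by
        refine Finset.sum_congr rfl fun x _ => ?_
        rw [Finset.sum_comm]
        refine Finset.sum_congr rfl fun t _ => ?_
        simp only [Finset.mul_sum, Finset.sum_mul, mul_assoc]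
        exact Finset.sum_comm
    _ = ∑ x, (E x).trace.re := by
        simp only [hν.2, one_mul, hM.sum_re_trace_mul, ← Finset.sum_mul, hα.2]
    _ = 1 := hE.sum_re_trace

lemma Eprior_eq_Epost {d : ℕ} {X Y T Z : Type*} [Fintype X] [Fintype Y] [Fintype T] [Fintype Z]
    (f : X → Y → ℝ) (α : T → X → ℝ) (E : X → Mat d) {N : T → Y → Mat d} {M : Z → Mat d}
    {ν : T → Y → Z → ℝ} (hN : ∀ t y, N t y = ∑ z, ν t y z • M z) :
    Eprior f α E N = Epost f α E M ν := by
  simp only [Eprior, Epost, hN, re_trace_mul_sum_smul_s11]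
  simp only [Finset.mul_sum, mul_assoc]

lemma bddAbove_Epost {d : ℕ} {X Y T : Type*} [Fintype X] [Fintype Y] [Fintype T]
    {f : X → Y → ℝ} {α : T → X → ℝ} {E : X → Mat d}
    (hf : IsScore f) (hα : IsPartialInfo α) (hE : IsStateEnsemble E) :
    BddAbove {p : ℝ | ∃ (n : ℕ) (M : Fin n → Mat d) (ν : T → Y → Fin n → ℝ),
      IsMeasurement M ∧ IsPostProc ν ∧ p = Epost f α E M ν} := by
  refine ⟨1, ?_⟩
  rintro _ ⟨n, M, ν, hM, hν, rfl⟩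
  exact Epost_le_one hf hα hE hM hν

lemma IsCompatible.Eprior_le_EpostMax {d : ℕ} {X Y T : Type*} [Fintype X] [Fintype Y] [Fintype T]
    {f : X → Y → ℝ} {α : T → X → ℝ} {E : X → Mat d} {N : T → Y → Mat d}
    (hf : IsScore f) (hα : IsPartialInfo α) (hE : IsStateEnsemble E) (hN : IsCompatible N) :
    Eprior f α E N ≤ EpostMax f α E := by
  obtain ⟨n, M, ν, hM, hν, hNM⟩ := hN
  exact le_csSup (bddAbove_Epost hf hα hE) ⟨n, M, ν, hM, hν, Eprior_eq_Epost f α E hNM⟩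

theorem stmt11_general {d : ℕ} {X Y T : Type} [Fintype X] [Fintype Y] [Fintype T]
    (E : X → Mat d) (hE : IsStateEnsemble E)
    (f : X → Y → ℝ) (hf : IsScore f)
    (α : T → X → ℝ) (hα : IsPartialInfo α)
    (N : T → Y → Mat d)
    (hgt : Eprior f α E N > EpostMax f α E) :
    ¬ IsCompatible N :=
  fun hN => (hN.Eprior_le_EpostMax hf hα hE).not_gt hgt

theorem stmt11 {d : ℕ} {X Y T : Type} [Fintype X] [Fintype Y] [Fintype T]
    (E : X → Mat d) (hE : IsStateEnsemble E)
    (f : X → Y → ℝ) (hf : IsScore f)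
    (α : T → X → ℝ) (hα : IsPartialInfo α)
    (N : T → Y → Mat d) (hN : ∀ t, IsMeasurement (N t))
    (hgt : Eprior f α E N > EpostMax f α E) :
    ¬ IsCompatible N :=
  stmt11_general E hE f hf α hα N hgt
end
end
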